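/- For any sequence of integers c₁,…,c_k, the q-continuants satisfy E_{k-1}(c₂,…,c_k)_q · q^{c_k-1} E_{k-1}(c₁,…,c_{k-1})_q − E_k(c₁,…,c_k)_q · q^{c_k-1} E_{k-2}(c₂,…,c_{k-1})_q = q^{∑_{i=1}^{k}(c_i - 1)}. -/
import Mathlib


open LaurentPolynomial

/-- The `q`-integer `[c]_q = (1-q^c)/(1-q)` for an arbitrary integer `c`:
`[c]_q = 1+q+⋯+q^{c-1}` for `c ≥ 0` and `[-n]_q = -q^{-1}-⋯-q^{-n}` for `n > 0`. -/
noncomputable def qInt (c : ℤ) : LaurentPolynomial ℤ :=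
  if 0 ≤ c then ∑ i ∈ Finset.range c.toNat, T (i : ℤ)
  else -∑ i ∈ Finset.range (-c).toNat, T (-(i + 1) : ℤ)

/-- `M_q(c₁,…,c_k) = ∏ᵢ [[ [cᵢ]_q, -q^{cᵢ-1}],[1,0]]` over `ℤ[q,q^{-1}]`. -/
noncomputable def Mq (l : List ℤ) : Matrix (Fin 2) (Fin 2) (LaurentPolynomial ℤ) :=
  (l.map fun c => !![qInt c, -T (c - 1); 1, 0]).prod

/-- Auxiliary function computing the `q`-continuant of a sequence read backwards:
`contAux [c_j, c_{j-1}, …, c₁] = E_j(c₁,…,c_j)_q`, implementing the recursion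
`E_j(c₁,…,c_j) = [c_j]_q E_{j-1}(c₁,…,c_{j-1}) - q^{c_{j-1}-1} E_{j-2}(c₁,…,c_{j-2})`
with `E₀ = 1`. -/
noncomputable def contAux : List ℤ → LaurentPolynomial ℤ
  | [] => 1
  | [c] => qInt c
  | a :: b :: t => qInt a * contAux (b :: t) - T (b - 1) * contAux t

/-- The `q`-continuant `E_k(c₁,…,c_k)_q`. -/
noncomputable def Econt (l : List ℤ) : LaurentPolynomial ℤ := contAux l.reverse

lemma Econt_snoc (l : List ℤ) (e d : ℤ) :
    Econt (l ++ [e] ++ [d]) = qInt d * Econt (l ++ [e]) - T (e - 1) * Econt l := by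
  simp only [Econt, List.reverse_append, List.reverse_cons, List.reverse_nil,
    List.nil_append, List.cons_append, List.singleton_append]
  rfl

lemma Mq_nil : Mq [] = 1 := by simp [Mq]

lemma Mq_cons (c : ℤ) (l : List ℤ) :
    Mq (c :: l) = !![qInt c, -T (c - 1); 1, 0] * Mq l := by
  simp [Mq]

lemma Mq_append (l l' : List ℤ) : Mq (l ++ l') = Mq l * Mq l' := by
  simp [Mq]

lemma Mq_eq (c : ℤ) (mid : List ℤ) (d : ℤ) :
    Mq ((c :: mid) ++ [d]) =
      !![Econt ((c :: mid) ++ [d]), -(T (d - 1) * Econt (c :: mid));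
         Econt (mid ++ [d]), -(T (d - 1) * Econt mid)] := by
  induction mid using List.reverseRecOn generalizing d with
  | nil =>
      show Mq ([c] ++ [d]) = _
      rw [Mq_append]
      simp only [Mq, List.map_cons, List.map_nil, List.prod_cons, List.prod_nil, mul_one]
      rw [Matrix.mul_fin_two]
      have h1 : Econt ([c] ++ [d]) = qInt d * qInt c - T (c - 1) := by
        simp [Econt, contAux]
      have h2 : Econt [c] = qInt c := rfl
      have h3 : Econt ([] : List ℤ) = 1 := rfl
      have h4 : Econt ([] ++ [d]) = qInt d := by simp [Econt, contAux]
      rw [h1, h2, h3, h4]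
      congr 1 <;> ring
  | append_singleton mid e ih =>
      have key : (c :: (mid ++ [e])) ++ [d] = ((c :: mid) ++ [e]) ++ [d] := by simp
      rw [key, Mq_append, ih e]
      have hMd : Mq [d] = !![qInt d, -T (d - 1); 1, 0] := by
        simp [Mq]
      rw [hMd, Matrix.mul_fin_two]
      have e1 : Econt ((c :: mid) ++ [e] ++ [d])
          = qInt d * Econt ((c :: mid) ++ [e]) - T (e - 1) * Econt (c :: mid) :=
        Econt_snoc (c :: mid) e d
      have e2 : Econt (mid ++ [e] ++ [d])
          = qInt d * Econt (mid ++ [e]) - T (e - 1) * Econt mid :=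
        Econt_snoc mid e d
      rw [show ((c :: mid) ++ [e]) ++ [d] = (c :: (mid ++ [e])) ++ [d] by simp] at e1 ⊢
      rw [show c :: (mid ++ [e]) = (c :: mid) ++ [e] by simp] at e1 ⊢
      rw [e1, e2]
      congr 1 <;> ring

lemma Mq_det (l : List ℤ) : (Mq l).det = T ((l.map fun ci => ci - 1).sum) := by
  induction l with
  | nil => rw [Mq_nil, Matrix.det_one]; simp
  | cons c l ih =>
      rw [Mq_cons, Matrix.det_mul, ih, Matrix.det_fin_two_of]
      simp only [mul_zero, zero_sub, neg_mul, one_mul, neg_neg, List.map_cons,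
        List.sum_cons, T_add, mul_one]

/-- For any integers `c₁,…,c_k` (`k ≥ 2`, written `c₁ = c`, interior `mid`, `c_k = d`):
`E_{k-1}(c₂,…,c_k)·q^{c_k-1}E_{k-1}(c₁,…,c_{k-1}) − E_k(c₁,…,c_k)·q^{c_k-1}E_{k-2}(c₂,…,c_{k-1})
 = q^{∑(cᵢ-1)}`. -/
theorem Econt_det_identity (c : ℤ) (mid : List ℤ) (d : ℤ) :
    Econt (mid ++ [d]) * (T (d - 1) * Econt (c :: mid)) -
        Econt (c :: (mid ++ [d])) * (T (d - 1) * Econt mid) =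
      T (((c :: (mid ++ [d])).map fun ci => ci - 1).sum) := by
  have h := Mq_det ((c :: mid) ++ [d])
  rw [Mq_eq c mid d, Matrix.det_fin_two_of] at h
  rw [show ((c :: mid) ++ [d] : List ℤ) = c :: (mid ++ [d]) from rfl] at h
  rw [← h]
  ring
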